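/- Define p(y) := (2π)^{−1/2} e^{−y²/2}, and define p^{[1]} := p and p^{[n+1]}(y) := ∫_y^∞ p^{[n]}(x) dx for n ≥ 1. Let M ≥ 1 and N ≥ 1 be integers and let d_1, …, d_N be positive real numbers. Then ∫_{(0,∞)^N} p^{[M]}( d_1 y_1 + … + d_N y_N ) dy_1 … dy_N = ( ∏_{i=1}^N 1/d_i ) · p^{[M+N]}(0). -/

import Mathlib

/-!
Prove the shifted identity `∫_{(0,∞)^N} p^{[M]}(c + Σ dᵢyᵢ) dy = (∏ 1/dᵢ) · p^{[M+N]}(c)` by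
induction on `N`. By Fubini, with `y₁` as the outer variable, the inner integral is
`(∏_{i ≥ 2} 1/dᵢ) · p^{[M+N-1]}(c + d₁y₁)`, and the substitution `x = c + d₁y₁` turns its
integral over `y₁ > 0` into `p^{[M+N]}(c) / d₁`. Fubini applies because
`|p^{[n]}(x)| ≤ e^{1/2} e^{-x}`: the Gaussian satisfies this bound and tail integration
preserves it.
-/

open MeasureTheory Real

/-- The standard Gaussian density `p(y) = (2π)^{-1/2} e^{-y²/2}`. -/
noncomputable def gaussDensity (y : ℝ) : ℝ := (2 * π) ^ (-(1 / 2 : ℝ)) * Real.exp (-y ^ 2 / 2)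

/-- The iterated tail integrals of the Gaussian density: `pIter 1 = p` and
`pIter (n+1) y = ∫_y^∞ pIter n x dx` for `n ≥ 1` (the value at `0` is irrelevant). -/
noncomputable def pIter : ℕ → ℝ → ℝ
  | 0, y => gaussDensity y
  | 1, y => gaussDensity y
  | (n + 2), y => ∫ x in Set.Ioi y, pIter (n + 1) x

open Set

noncomputable def tailIntegral (f : ℝ → ℝ) (y : ℝ) : ℝ := ∫ x in Ioi y, f x

theorem measurable_tailIntegral {f : ℝ → ℝ} (hf : Measurable f) :
    Measurable (tailIntegral f) := by
  have hjoint : StronglyMeasurable (Function.uncurry fun y x : ℝ => (Ioi y).indicator f x) :=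
    ((hf.comp measurable_snd).indicator
      (measurableSet_lt measurable_fst measurable_snd)).stronglyMeasurable
  have hind : tailIntegral f = fun y => ∫ x, (Ioi y).indicator f x :=
    funext fun y => (integral_indicator measurableSet_Ioi).symm
  rw [hind]
  exact (hjoint.integral_prod_right (ν := volume)).measurable

theorem abs_tailIntegral_le {f : ℝ → ℝ} {C : ℝ} (hf : ∀ x, |f x| ≤ C * exp (-x)) (y : ℝ) :
    |tailIntegral f y| ≤ C * exp (-y) := by
  have hexp : IntegrableOn (fun x => C * exp (-x)) (Ioi y) := by
    have h := (exp_neg_integrableOn_Ioi y one_pos).const_mul C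
    simp only [neg_mul, one_mul] at h
    exact h
  calc |tailIntegral f y| = ‖∫ x in Ioi y, f x‖ := (norm_eq_abs _).symm
    _ ≤ ∫ x in Ioi y, C * exp (-x) :=
        norm_integral_le_of_norm_le hexp (.of_forall fun x => (norm_eq_abs _).trans_le (hf x))
    _ = C * exp (-y) := by rw [integral_const_mul, integral_exp_neg_Ioi]

theorem integral_Ioi_comp_add_mul (f : ℝ → ℝ) (c : ℝ) {d : ℝ} (hd : 0 < d) :
    ∫ x in Ioi 0, f (c + d * x) = d⁻¹ * tailIntegral f c := by
  have htrans := (measurePreserving_add_left volume c).setIntegral_preimage_emb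
    (measurableEmbedding_addLeft c) f (Ioi c)
  rw [preimage_const_add_Ioi, sub_self] at htrans
  rw [integral_comp_mul_left_Ioi (fun x => f (c + x)) 0 hd, mul_zero, smul_eq_mul, htrans,
    tailIntegral]

theorem integrable_pi_Ioi_comp_sum {ι : Type*} [Fintype ι] {f : ℝ → ℝ} {C : ℝ}
    (hf : Measurable f) (hC : ∀ x, |f x| ≤ C * exp (-x)) {d : ι → ℝ} (hd : ∀ i, 0 < d i) (c : ℝ) :
    Integrable (fun y : ι → ℝ => f (c + ∑ i, d i * y i))
      (Measure.pi fun _ => volume.restrict (Ioi 0)) := by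
  have hprod : Integrable (fun y : ι → ℝ => ∏ i, exp (-(d i * y i)))
      (Measure.pi fun _ => volume.restrict (Ioi 0)) :=
    Integrable.fintype_prod fun i => by
      have h := exp_neg_integrableOn_Ioi 0 (hd i)
      simp only [neg_mul] at h
      exact h
  refine (hprod.const_mul (C * exp (-c))).mono' (hf.comp (by fun_prop)).aestronglyMeasurable
    (.of_forall fun y => ?_)
  calc ‖f (c + ∑ i, d i * y i)‖ ≤ C * exp (-(c + ∑ i, d i * y i)) :=
        (norm_eq_abs _).trans_le (hC _)
    _ = C * exp (-c) * ∏ i, exp (-(d i * y i)) := by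
      rw [neg_add, exp_add, ← Finset.sum_neg_distrib, exp_sum, mul_assoc]

theorem integral_pi_Ioi_comp_sum {f : ℝ → ℝ} {C : ℝ} (hf : Measurable f)
    (hC : ∀ x, |f x| ≤ C * exp (-x)) :
    ∀ {N : ℕ} {d : Fin N → ℝ}, (∀ i, 0 < d i) → ∀ c : ℝ,
      ∫ y, f (c + ∑ i, d i * y i) ∂(Measure.pi fun _ => volume.restrict (Ioi 0))
        = (∏ i, 1 / d i) * tailIntegral^[N] f c
  | 0, d, _, c => by simp [measureReal_def]
  | N + 1, d, hd, c => by
    set μ : Measure ℝ := volume.restrict (Ioi 0)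
    let g : ℝ × (Fin N → ℝ) → ℝ := fun z => f ((c + d 0 * z.1) + ∑ i, d i.succ * z.2 i)
    have he := measurePreserving_piFinSuccAbove (fun _ : Fin (N + 1) => μ) 0
    have hsplit : (fun y : Fin (N + 1) → ℝ => f (c + ∑ i, d i * y i)) =
        g ∘ MeasurableEquiv.piFinSuccAbove (fun _ => ℝ) 0 := by
      ext y
      simp [g, Fin.sum_univ_succ, add_assoc, MeasurableEquiv.piFinSuccAbove_apply, Fin.tail]
    have hg : Integrable g (μ.prod (Measure.pi fun _ => μ)) := by
      rw [← he.integrable_comp_emb (MeasurableEquiv.measurableEmbedding _), ← hsplit]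
      exact integrable_pi_Ioi_comp_sum hf hC hd c
    calc ∫ y, f (c + ∑ i, d i * y i) ∂(Measure.pi fun _ => μ)
        = ∫ z, g z ∂(μ.prod (Measure.pi fun _ => μ)) := by
          rw [hsplit]; exact he.integral_comp' _
      _ = ∫ x, (∏ i : Fin N, 1 / d i.succ) * tailIntegral^[N] f (c + d 0 * x) ∂μ := by
        rw [integral_prod g hg]
        exact integral_congr_ae (.of_forall fun x =>
          integral_pi_Ioi_comp_sum hf hC (fun i => hd i.succ) (c + d 0 * x))
      _ = (∏ i, 1 / d i) * tailIntegral^[N + 1] f c := by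
        rw [integral_const_mul, integral_Ioi_comp_add_mul _ _ (hd 0), Fin.prod_univ_succ,
          Function.iterate_succ_apply']
        ring

theorem abs_gaussDensity_le (y : ℝ) : |gaussDensity y| ≤ exp (1 / 2) * exp (-y) := by
  have hc : (2 * π) ^ (-(1 / 2 : ℝ)) ≤ 1 :=
    rpow_le_one_of_one_le_of_nonpos (by linarith [pi_gt_three]) (by norm_num)
  rw [gaussDensity, abs_of_nonneg (by positivity), ← exp_add]
  calc (2 * π) ^ (-(1 / 2 : ℝ)) * exp (-y ^ 2 / 2) ≤ 1 * exp (-y ^ 2 / 2) := by gcongr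
    _ ≤ exp (1 / 2 + -y) := by
      rw [one_mul, exp_le_exp]; nlinarith [sq_nonneg (y - 1)]

theorem measurable_gaussDensity : Measurable gaussDensity := by
  unfold gaussDensity; fun_prop

theorem pIter_succ {n : ℕ} (hn : 1 ≤ n) : pIter (n + 1) = tailIntegral (pIter n) := by
  obtain ⟨k, rfl⟩ := Nat.exists_eq_add_of_le' hn
  rfl

theorem pIter_add_eq_iterate {M : ℕ} (hM : 1 ≤ M) (N : ℕ) :
    pIter (M + N) = tailIntegral^[N] (pIter M) := by
  induction N with
  | zero => rfl
  | succ N ih => rw [← add_assoc, pIter_succ (by omega), ih, Function.iterate_succ_apply']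

theorem measurable_pIter : ∀ n, Measurable (pIter n)
  | 0 => measurable_gaussDensity
  | 1 => measurable_gaussDensity
  | n + 2 => measurable_tailIntegral (measurable_pIter (n + 1))

theorem abs_pIter_le : ∀ n y, |pIter n y| ≤ exp (1 / 2) * exp (-y)
  | 0 => abs_gaussDensity_le
  | 1 => abs_gaussDensity_le
  | n + 2 => abs_tailIntegral_le (abs_pIter_le (n + 1))

theorem stmt_14_general (M N : ℕ) (hM : 1 ≤ M)
    (d : Fin N → ℝ) (hd : ∀ i, 0 < d i) :
    (∫ y in {y : Fin N → ℝ | ∀ i, 0 < y i}, pIter M (∑ i, d i * y i))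
      = (∏ i, 1 / d i) * pIter (M + N) 0 := by
  have horthant : {y : Fin N → ℝ | ∀ i, 0 < y i} = univ.pi fun _ => Ioi 0 := by
    ext y; simp
  rw [horthant, volume_pi, Measure.restrict_pi_pi, pIter_add_eq_iterate hM]
  simpa only [zero_add] using
    integral_pi_Ioi_comp_sum (measurable_pIter M) (abs_pIter_le M) hd 0

/-- For `M, N ≥ 1` and positive reals `d₁, …, d_N`,
`∫_{(0,∞)^N} p^{[M]}(d₁y₁ + ⋯ + d_N y_N) dy = (∏ᵢ 1/dᵢ) · p^{[M+N]}(0)`. -/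
theorem stmt_14 (M N : ℕ) (hM : 1 ≤ M) (hN : 1 ≤ N)
    (d : Fin N → ℝ) (hd : ∀ i, 0 < d i) :
    (∫ y in {y : Fin N → ℝ | ∀ i, 0 < y i}, pIter M (∑ i, d i * y i))
      = (∏ i, 1 / d i) * pIter (M + N) 0 :=
  stmt_14_general M N hM d hd
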